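/- Let p > q ≥ 1 be coprime integers. For every nonempty u ∈ L_{p/q} and every l ∈ ℕ, every letter of wmin_{p/q}(u,l) belongs to the subalphabet {0,…,q−1}; and for every u ∈ L_{p/q} and every l ∈ ℕ, every letter of wmax_{p/q}(u,l) belongs to the subalphabet {p−q,…,p−1}. -/

import Mathlib

/-- The valuation in base `p/q` of a digit word (most significant digit first):
`val_{p/q}(a_k ⋯ a_0) = (1/q) ∑ a_i (p/q)^i`, with `val(ε) = 0`. -/
def ratVal (p q : ℕ) (w : List ℕ) : ℚ :=
  w.foldl (fun x a => (p : ℚ) / q * x + (a : ℚ) / q) 0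

/-- Membership in the language `L_{p/q}`: all letters lie in `{0,…,p-1}`, the valuation
is a nonnegative integer, and the word is empty or has nonzero leading digit. -/
def InLang (p q : ℕ) (w : List ℕ) : Prop :=
  (∀ a ∈ w, a < p) ∧ (∃ n : ℕ, ratVal p q w = n) ∧ w.head? ≠ some 0

/-- `v` is the lexicographically least word of length `l` over `{0,…,p-1}`
such that `u ++ v ∈ L_{p/q}`. -/
def IsWmin (p q : ℕ) (u : List ℕ) (l : ℕ) (v : List ℕ) : Prop :=
  v.length = l ∧ InLang p q (u ++ v) ∧
    ∀ v' : List ℕ, v'.length = l → InLang p q (u ++ v') →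
      ¬ List.Lex (· < · : ℕ → ℕ → Prop) v' v

/-- `v` is the lexicographically greatest word of length `l` over `{0,…,p-1}`
such that `u ++ v ∈ L_{p/q}`. -/
def IsWmax (p q : ℕ) (u : List ℕ) (l : ℕ) (v : List ℕ) : Prop :=
  v.length = l ∧ InLang p q (u ++ v) ∧
    ∀ v' : List ℕ, v'.length = l → InLang p q (u ++ v') →
      ¬ List.Lex (· < · : ℕ → ℕ → Prop) v v'

namespace Stmt6Aux

/-- The fold step of `ratVal`. -/
def fpq (p q : ℕ) : ℚ → ℕ → ℚ := fun x a => (p : ℚ) / q * x + (a : ℚ) / q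

lemma flatMap_cast (w : List ℕ) :
    (w.flatMap fun a => [(a : ℚ)]) = w.map (Nat.cast : ℕ → ℚ) := by
  induction w with
  | nil => rfl
  | cons a s ih => simp_all

lemma ratVal_eq (p q : ℕ) (w : List ℕ) : ratVal p q w = List.foldl (fpq p q) 0 w := by
  unfold ratVal fpq
  rw [show (do let a ← w; pure ((a : ℚ)) : List ℚ) = w.map (Nat.cast : ℕ → ℚ) by induction w <;> simp_all,
    List.foldl_map]

lemma ratVal_append (p q : ℕ) (u v : List ℕ) :
    ratVal p q (u ++ v) = List.foldl (fpq p q) (ratVal p q u) v := by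
  simp [ratVal_eq, List.foldl_append]

/-- Integer weighted digit sum: `natR (a::s) = a * p^|s| + q * natR s`. -/
def natR (p q : ℕ) : List ℕ → ℕ
  | [] => 0
  | a :: s => a * p ^ s.length + q * natR p q s

lemma scaled (p q : ℕ) (hq0 : (q : ℚ) ≠ 0) :
    ∀ (w : List ℕ) (x : ℚ),
      List.foldl (fpq p q) x w * (q : ℚ) ^ w.length
        = x * (p : ℚ) ^ w.length + (natR p q w : ℚ)
  | [], x => by simp [natR]
  | a :: s, x => by
    have ih := scaled p q hq0 s (fpq p q x a)
    rw [List.foldl_cons, List.length_cons, pow_succ, ← mul_assoc, ih, natR]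
    unfold fpq
    push_cast
    field_simp
    ring

/-- Any digit `a` that can be followed to an integral valuation from integer value `n`
must satisfy `q ∣ p*n + a`. -/
lemma forced (p q : ℕ) (hq : 1 ≤ q) (hco : Nat.Coprime p q)
    (n a : ℕ) (s : List ℕ) (N : ℕ)
    (h : List.foldl (fpq p q) (n : ℚ) (a :: s) = N) :
    q ∣ p * n + a := by
  have hq0 : (q : ℚ) ≠ 0 := Nat.cast_ne_zero.mpr (by omega)
  have hs := scaled p q hq0 (a :: s) (n : ℚ)
  rw [h] at hs
  have hnat : N * q ^ (s.length + 1) = n * p ^ (s.length + 1) + natR p q (a :: s) := by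
    exact_mod_cast hs
  have hexp : n * p ^ (s.length + 1) + natR p q (a :: s)
      = p ^ s.length * (p * n + a) + q * natR p q s := by
    simp only [natR, List.length_cons, pow_succ]
    ring
  have h1 : q ∣ p ^ s.length * (p * n + a) + q * natR p q s := by
    rw [← hexp, ← hnat]
    exact Dvd.dvd.mul_left (dvd_pow_self q (Nat.succ_ne_zero _)) N
  have h2 : q ∣ p ^ s.length * (p * n + a) := by
    have := Nat.dvd_sub h1 (dvd_mul_right q (natR p q s))
    simpa using this
  exact (hco.symm.pow_right s.length).dvd_of_dvd_mul_left h2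

/-- The least admissible digit from integer value `n`. -/
def digMin (p q n : ℕ) : ℕ := (q - p * n % q) % q

/-- The greatest admissible digit (below `p`) from integer value `n`. -/
def digMax (p q n : ℕ) : ℕ := p - 1 - (p - 1 - digMin p q n) % q

lemma digMin_lt (p q n : ℕ) (hq : 1 ≤ q) : digMin p q n < q := Nat.mod_lt _ hq

lemma digMin_dvd (p q n : ℕ) (hq : 1 ≤ q) : q ∣ p * n + digMin p q n := by
  unfold digMin
  rcases Nat.eq_zero_or_pos (p * n % q) with h | h
  · rw [h, Nat.sub_zero, Nat.mod_self, Nat.add_zero]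
    exact Nat.dvd_of_mod_eq_zero h
  · have hlt : p * n % q < q := Nat.mod_lt _ hq
    rw [Nat.mod_eq_of_lt (by omega)]
    have hdm := Nat.div_add_mod (p * n) q
    have heq : p * n + (q - p * n % q) = q * (p * n / q) + q := by omega
    rw [heq]
    exact dvd_add (dvd_mul_right q _) dvd_rfl

lemma digMax_lt (p q n : ℕ) (hp : 1 ≤ p) : digMax p q n < p := by
  unfold digMax; omega

lemma digMax_ge (p q n : ℕ) (hq : 1 ≤ q) (hpq : q < p) : p - q ≤ digMax p q n := by
  unfold digMax
  have h := Nat.mod_lt (p - 1 - digMin p q n) hq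
  omega

lemma digMax_dvd (p q n : ℕ) (hq : 1 ≤ q) (hpq : q < p) :
    q ∣ p * n + digMax p q n := by
  have hd := digMin_dvd p q n hq
  have hdlt : digMin p q n < q := digMin_lt p q n hq
  have h1 : q ∣ (p - 1 - digMin p q n) - (p - 1 - digMin p q n) % q :=
    Nat.dvd_sub_mod _
  have h2 : (p - 1 - digMin p q n) % q ≤ p - 1 - digMin p q n := Nat.mod_le _ _
  have h3 : p * n + digMax p q n
      = (p * n + digMin p q n)
        + ((p - 1 - digMin p q n) - (p - 1 - digMin p q n) % q) := by
    unfold digMax; omega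
  rw [h3]
  exact dvd_add hd h1

/-- The canonical minimal continuation of length `l` from integer value `n`. -/
def cmin (p q : ℕ) : ℕ → ℕ → List ℕ
  | _, 0 => []
  | n, l + 1 => digMin p q n :: cmin p q ((p * n + digMin p q n) / q) l

/-- The canonical maximal continuation of length `l` from integer value `n`. -/
def cmax (p q : ℕ) : ℕ → ℕ → List ℕ
  | _, 0 => []
  | n, l + 1 => digMax p q n :: cmax p q ((p * n + digMax p q n) / q) l

lemma cmin_length (p q : ℕ) : ∀ l n, (cmin p q n l).length = l
  | 0, _ => rfl
  | l + 1, n => by simp [cmin, cmin_length p q l]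

lemma cmax_length (p q : ℕ) : ∀ l n, (cmax p q n l).length = l
  | 0, _ => rfl
  | l + 1, n => by simp [cmax, cmax_length p q l]

lemma cmin_mem (p q : ℕ) (hq : 1 ≤ q) : ∀ l n a, a ∈ cmin p q n l → a < q
  | 0, n, a, h => by simp [cmin] at h
  | l + 1, n, a, h => by
    simp only [cmin, List.mem_cons] at h
    rcases h with rfl | h
    · exact digMin_lt p q n hq
    · exact cmin_mem p q hq l _ a h

lemma cmax_mem (p q : ℕ) (hq : 1 ≤ q) (hpq : q < p) :
    ∀ l n a, a ∈ cmax p q n l → p - q ≤ a ∧ a < p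
  | 0, n, a, h => by simp [cmax] at h
  | l + 1, n, a, h => by
    simp only [cmax, List.mem_cons] at h
    rcases h with rfl | h
    · exact ⟨digMax_ge p q n hq hpq, digMax_lt p q n (by omega)⟩
    · exact cmax_mem p q hq hpq l _ a h

lemma cast_div_step (p q n a : ℕ) (hq : 1 ≤ q) (hdvd : q ∣ p * n + a) :
    (((p * n + a) / q : ℕ) : ℚ) = fpq p q (n : ℚ) a := by
  have hq0 : (q : ℚ) ≠ 0 := Nat.cast_ne_zero.mpr (by omega)
  rw [Nat.cast_div hdvd hq0]
  unfold fpq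
  push_cast
  ring

lemma cmin_val (p q : ℕ) (hq : 1 ≤ q) :
    ∀ (l n : ℕ), ∃ N : ℕ, List.foldl (fpq p q) (n : ℚ) (cmin p q n l) = N
  | 0, n => ⟨n, rfl⟩
  | l + 1, n => by
    obtain ⟨N, hN⟩ := cmin_val p q hq l ((p * n + digMin p q n) / q)
    refine ⟨N, ?_⟩
    rw [cmin, List.foldl_cons, ← cast_div_step p q n _ hq (digMin_dvd p q n hq)]
    exact hN

lemma cmax_val (p q : ℕ) (hq : 1 ≤ q) (hpq : q < p) :
    ∀ (l n : ℕ), ∃ N : ℕ, List.foldl (fpq p q) (n : ℚ) (cmax p q n l) = N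
  | 0, n => ⟨n, rfl⟩
  | l + 1, n => by
    obtain ⟨N, hN⟩ := cmax_val p q hq hpq l ((p * n + digMax p q n) / q)
    refine ⟨N, ?_⟩
    rw [cmax, List.foldl_cons, ← cast_div_step p q n _ hq (digMax_dvd p q n hq hpq)]
    exact hN

lemma minLemma (p q : ℕ) (hq : 1 ≤ q) (hco : Nat.Coprime p q) :
    ∀ (v : List ℕ) (n : ℕ), (∃ N : ℕ, List.foldl (fpq p q) (n : ℚ) v = N) →
      ¬ List.Lex (· < · : ℕ → ℕ → Prop) v (cmin p q n v.length) := by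
  intro v
  induction v with
  | nil => intro n _ hlex; cases hlex
  | cons a s ih =>
    intro n hex hlex
    obtain ⟨N, hN⟩ := hex
    rw [List.length_cons, cmin] at hlex
    have hfa : q ∣ p * n + a := forced p q hq hco n a s N hN
    cases hlex with
    | rel h =>
      have hd := digMin_dvd p q n hq
      have h3 : q ∣ digMin p q n - a := by
        have h3' := Nat.dvd_sub hd hfa
        have heq : (p * n + digMin p q n) - (p * n + a) = digMin p q n - a := by omega
        rwa [heq] at h3'
      have h4 : q ≤ digMin p q n - a := Nat.le_of_dvd (by omega) h3
      have h5 := digMin_lt p q n hq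
      omega
    | cons h =>
      -- here the head of both lists has been substituted to `digMin p q n`
      have hN' : List.foldl (fpq p q)
          (((p * n + digMin p q n) / q : ℕ) : ℚ) s = N := by
        rw [cast_div_step p q n (digMin p q n) hq hfa]
        exact hN
      exact ih ((p * n + digMin p q n) / q) ⟨N, hN'⟩ h

lemma maxLemma (p q : ℕ) (hq : 1 ≤ q) (hpq : q < p) (hco : Nat.Coprime p q) :
    ∀ (v : List ℕ) (n : ℕ), (∀ a ∈ v, a < p) →
      (∃ N : ℕ, List.foldl (fpq p q) (n : ℚ) v = N) →
      ¬ List.Lex (· < · : ℕ → ℕ → Prop) (cmax p q n v.length) v := by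
  intro v
  induction v with
  | nil => intro n _ _ hlex; cases hlex
  | cons a s ih =>
    intro n hvp hex hlex
    obtain ⟨N, hN⟩ := hex
    rw [List.length_cons, cmax] at hlex
    have hfa : q ∣ p * n + a := forced p q hq hco n a s N hN
    cases hlex with
    | rel h =>
      -- h : digMax p q n < a
      have hd := digMax_dvd p q n hq hpq
      have h3 : q ∣ a - digMax p q n := by
        have h3' := Nat.dvd_sub hfa hd
        have heq : (p * n + a) - (p * n + digMax p q n) = a - digMax p q n := by omega
        rwa [heq] at h3'
      have h4 : q ≤ a - digMax p q n := Nat.le_of_dvd (by omega) h3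
      have h5 := digMax_ge p q n hq hpq
      have h6 : a < p := hvp a List.mem_cons_self
      omega
    | cons h =>
      have hN' : List.foldl (fpq p q)
          (((p * n + digMax p q n) / q : ℕ) : ℚ) s = N := by
        rw [cast_div_step p q n (digMax p q n) hq hfa]
        exact hN
      exact ih ((p * n + digMax p q n) / q)
        (fun b hb => hvp b (List.mem_cons_of_mem _ hb)) ⟨N, hN'⟩ h

lemma lex_trichotomy : ∀ s t : List ℕ,
    List.Lex (· < · : ℕ → ℕ → Prop) s t ∨ s = t ∨
      List.Lex (· < · : ℕ → ℕ → Prop) t s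
  | [], [] => Or.inr (Or.inl rfl)
  | [], _ :: _ => Or.inl List.Lex.nil
  | _ :: _, [] => Or.inr (Or.inr List.Lex.nil)
  | a :: s, b :: t => by
    rcases Nat.lt_trichotomy a b with h | rfl | h
    · exact Or.inl (List.Lex.rel h)
    · rcases lex_trichotomy s t with h | rfl | h
      · exact Or.inl (List.Lex.cons h)
      · exact Or.inr (Or.inl rfl)
      · exact Or.inr (Or.inr (List.Lex.cons h))
    · exact Or.inr (Or.inr (List.Lex.rel h))

end Stmt6Aux

open Stmt6Aux in
/-- For coprime `p > q ≥ 1`: every letter of `wmin_{p/q}(u,l)` (for nonempty `u ∈ L_{p/q}`)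
lies in `{0,…,q-1}`, and every letter of `wmax_{p/q}(u,l)` (for `u ∈ L_{p/q}`)
lies in `{p-q,…,p-1}`. -/
theorem stmt6 (p q : ℕ) (hq : 1 ≤ q) (hpq : q < p) (hco : Nat.Coprime p q) :
    (∀ u : List ℕ, InLang p q u → u ≠ [] → ∀ l : ℕ, ∀ v : List ℕ,
      IsWmin p q u l v → ∀ a ∈ v, a < q) ∧
    (∀ u : List ℕ, InLang p q u → ∀ l : ℕ, ∀ v : List ℕ,
      IsWmax p q u l v → ∀ a ∈ v, p - q ≤ a ∧ a < p) := by
  constructor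
  · rintro u ⟨hup, ⟨n₀, hval⟩, hhead⟩ hne l v ⟨hlen, hvmem, hmin⟩ a ha
    have hval_v : ∃ N : ℕ, List.foldl (fpq p q) (n₀ : ℚ) v = N := by
      obtain ⟨N, hN⟩ := hvmem.2.1
      refine ⟨N, ?_⟩
      rw [ratVal_append, hval] at hN
      exact hN
    set w₀ := cmin p q n₀ l with hw₀
    have hw₀len : w₀.length = l := cmin_length p q l n₀
    have hw₀lang : InLang p q (u ++ w₀) := by
      refine ⟨?_, ?_, ?_⟩
      · intro b hb
        rcases List.mem_append.mp hb with hb | hb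
        · exact hup b hb
        · exact lt_trans (cmin_mem p q hq l n₀ b hb) hpq
      · obtain ⟨N, hN⟩ := cmin_val p q hq l n₀
        exact ⟨N, by rw [ratVal_append, hval]; exact hN⟩
      · obtain ⟨b, u', rfl⟩ := List.exists_cons_of_ne_nil hne
        simpa using hhead
    have h1 : ¬ List.Lex (· < · : ℕ → ℕ → Prop) w₀ v := hmin w₀ hw₀len hw₀lang
    have h2 : ¬ List.Lex (· < · : ℕ → ℕ → Prop) v w₀ := by
      have := minLemma p q hq hco v n₀ hval_v
      rwa [hlen] at this
    rcases lex_trichotomy v w₀ with h | rfl | h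
    · exact absurd h h2
    · exact cmin_mem p q hq l n₀ a ha
    · exact absurd h h1
  · rintro u ⟨hup, ⟨n₀, hval⟩, hhead⟩ l v ⟨hlen, hvmem, hmax⟩ a ha
    have hval_v : ∃ N : ℕ, List.foldl (fpq p q) (n₀ : ℚ) v = N := by
      obtain ⟨N, hN⟩ := hvmem.2.1
      refine ⟨N, ?_⟩
      rw [ratVal_append, hval] at hN
      exact hN
    set w₀ := cmax p q n₀ l with hw₀
    have hw₀len : w₀.length = l := cmax_length p q l n₀
    have hw₀lang : InLang p q (u ++ w₀) := by
      refine ⟨?_, ?_, ?_⟩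
      · intro b hb
        rcases List.mem_append.mp hb with hb | hb
        · exact hup b hb
        · exact (cmax_mem p q hq hpq l n₀ b hb).2
      · obtain ⟨N, hN⟩ := cmax_val p q hq hpq l n₀
        exact ⟨N, by rw [ratVal_append, hval]; exact hN⟩
      · cases u with
        | cons b u' => simpa using hhead
        | nil =>
          cases l with
          | zero => simp [hw₀, cmax]
          | succ l' =>
            simp only [List.nil_append, hw₀, cmax, List.head?_cons, ne_eq,
              Option.some.injEq]
            have := digMax_ge p q n₀ hq hpq
            omega
    have h1 : ¬ List.Lex (· < · : ℕ → ℕ → Prop) v w₀ := hmax w₀ hw₀len hw₀lang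
    have h2 : ¬ List.Lex (· < · : ℕ → ℕ → Prop) w₀ v := by
      have := maxLemma p q hq hpq hco v n₀
        (fun b hb => hvmem.1 b (List.mem_append.mpr (Or.inr hb))) hval_v
      rwa [hlen] at this
    rcases lex_trichotomy v w₀ with h | rfl | h
    · exact absurd h h1
    · exact cmax_mem p q hq hpq l n₀ a ha
    · exact absurd h h2
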